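/- arXiv:2505.24484 — 6 statements merged into one kernel-verified Lean document; each statement's English description precedes it below -/
import Mathlib

section
/- Let E be a Riesz space and let \(x \mapsto \bar{x}\) be a map from \(E^+\) to \(E^+\). Then the following are equivalent: (i) for all \(a, b \in E^+\), \(a \wedge \bar{b} \le \bar{a} \le a\); (ii) for all \(a, b \in E^+\), \(a \wedge \bar{b} = \bar{a} \wedge b\). -/
/-- For a map `t : E⁺ → E⁺` on a Riesz space `E`, conditions
(i) `a ⊓ t b ≤ t a ≤ a` and (ii) `a ⊓ t b = t a ⊓ b` (for all `a, b ∈ E⁺`) are equivalent. -/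
theorem truncation_axiom_equiv {E : Type*} [Lattice E] [AddCommGroup E]
    [CovariantClass E E (· + ·) (· ≤ ·)] [Module ℝ E]
    (t : E → E) (ht : ∀ a : E, 0 ≤ a → 0 ≤ t a) :
    (∀ a b : E, 0 ≤ a → 0 ≤ b → a ⊓ t b ≤ t a ∧ t a ≤ a) ↔
      (∀ a b : E, 0 ≤ a → 0 ≤ b → a ⊓ t b = t a ⊓ b) := by
  constructor
  · intro h a b ha hb
    obtain ⟨h1, h2⟩ := h a b ha hb
    obtain ⟨h3, h4⟩ := h b a hb ha
    refine le_antisymm (le_inf h1 (inf_le_right.trans h4)) ?_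
    exact le_inf (inf_le_left.trans h2) (le_trans (by rw [inf_comm]) h3)
  · intro h a b ha hb
    have hta : t a ≤ a := by
      have := h (t a) a (ht a ha) ha
      rw [inf_idem] at this
      rw [this]; exact inf_le_right
    exact ⟨(h a b ha hb).le.trans inf_le_left, hta⟩
end

section
/- Let E be a truncated Riesz space. For all \(x, y \in E^+\), the Birkhoff-type inequality \(|\bar{x} - \bar{y}| \le \overline{|x - y|}\) holds. -/
/-- Birkhoff-type inequality `|t x - t y| ≤ t |x - y|` for `x, y ∈ E⁺`. -/
theorem truncation_birkhoff {E : Type*} [Lattice E] [AddCommGroup E]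
    [CovariantClass E E (· + ·) (· ≤ ·)] [Module ℝ E]
    (t : E → E) (ht : ∀ a : E, 0 ≤ a → 0 ≤ t a)
    (hτ1 : ∀ a b : E, 0 ≤ a → 0 ≤ b → a ⊓ t b = t a ⊓ b)
    (hle : ∀ a : E, 0 ≤ a → t a ≤ a) :
    ∀ x y : E, 0 ≤ x → 0 ≤ y → |t x - t y| ≤ t |x - y| := by
  intro x y hx hy
  set z := |x - y| with hz
  have hz0 : (0:E) ≤ z := abs_nonneg _
  set s := x + y with hs
  have hs0 : (0:E) ≤ s := add_nonneg hx hy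
  have hw0 : (0:E) ≤ t s := ht s hs0
  have key : ∀ a : E, 0 ≤ a → a ≤ s → t a = a ⊓ t s := by
    intro a ha has
    have h1 := hτ1 a s ha hs0
    rw [h1, inf_eq_left.2 ((hle a ha).trans has)]
  have hxs : x ≤ s := le_add_of_nonneg_right hy
  have hys : y ≤ s := le_add_of_nonneg_left hx
  have hzs : z ≤ s := by
    rw [hz, abs_le', neg_sub]
    constructor
    · have : x - y ≤ x + y := by
        have := add_le_add_left (neg_le_self hy) x
        simpa [sub_eq_add_neg] using this
      simpa [hs] using this
    · have : y - x ≤ y + x := by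
        have := add_le_add_left (neg_le_self hx) y
        simpa [sub_eq_add_neg] using this
      rw [hs, add_comm]
      exact this
  rw [key x hx hxs, key y hy hys, key z hz0 hzs]
  refine le_inf ?_ ?_
  · exact abs_inf_sub_inf_le_abs _ _ _
  · rw [abs_le', neg_sub]
    constructor
    · calc x ⊓ t s - y ⊓ t s ≤ x ⊓ t s - 0 := by
            exact sub_le_sub_left (le_inf hy hw0) _
        _ = x ⊓ t s := sub_zero _
        _ ≤ t s := inf_le_right
    · calc y ⊓ t s - x ⊓ t s ≤ y ⊓ t s - 0 := by
            exact sub_le_sub_left (le_inf hx hw0) _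
        _ = y ⊓ t s := sub_zero _
        _ ≤ t s := inf_le_right
end

section
/- Two truncations on the same Riesz space E are equal if and only if they have the same set of fixed points. That is, if \(x \mapsto x^*\) and \(x \mapsto x^\star\) are truncations on E with \(\{x : |x|^* = |x|\} = \{x : |x|^\star = |x|\}\), then \(x^* = x^\star\) for all \(x \in E^+\). -/
/-- Two truncations on the same Riesz space with the same fixed-point set
agree on the positive cone. -/
theorem truncation_eq_of_fixedPoints_eq {E : Type*} [Lattice E] [AddCommGroup E]
    [CovariantClass E E (· + ·) (· ≤ ·)] [Module ℝ E]
    (s t : E → E)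
    (hs0 : ∀ a : E, 0 ≤ a → 0 ≤ s a)
    (hsτ1 : ∀ a b : E, 0 ≤ a → 0 ≤ b → a ⊓ s b = s a ⊓ b)
    (hsle : ∀ a : E, 0 ≤ a → s a ≤ a)
    (hsτ2 : ∀ a : E, 0 ≤ a → s a = 0 → a = 0)
    (ht0 : ∀ a : E, 0 ≤ a → 0 ≤ t a)
    (htτ1 : ∀ a b : E, 0 ≤ a → 0 ≤ b → a ⊓ t b = t a ⊓ b)
    (htle : ∀ a : E, 0 ≤ a → t a ≤ a)
    (htτ2 : ∀ a : E, 0 ≤ a → t a = 0 → a = 0)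
    (hfix : {x : E | s |x| = |x|} = {x : E | t |x| = |x|}) :
    ∀ x : E, 0 ≤ x → s x = t x := by
  -- First: each truncation is idempotent.
  have sidem : ∀ a : E, 0 ≤ a → s (s a) = s a := by
    intro a ha
    have h1 : a ⊓ s (s a) = s a ⊓ s a := hsτ1 a (s a) ha (hs0 a ha)
    have h2 : s (s a) ≤ a := le_trans (hsle _ (hs0 a ha)) (hsle a ha)
    rw [inf_eq_right.mpr h2, inf_idem] at h1
    exact h1
  have tidem : ∀ a : E, 0 ≤ a → t (t a) = t a := by
    intro a ha
    have h1 : a ⊓ t (t a) = t a ⊓ t a := htτ1 a (t a) ha (ht0 a ha)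
    have h2 : t (t a) ≤ a := le_trans (htle _ (ht0 a ha)) (htle a ha)
    rw [inf_eq_right.mpr h2, inf_idem] at h1
    exact h1
  -- fixed point transfer
  have hst : ∀ a : E, 0 ≤ a → t (s a) = s a := by
    intro a ha
    have hmem : s a ∈ {x : E | s |x| = |x|} := by
      simp only [Set.mem_setOf_eq, abs_of_nonneg (hs0 a ha)]
      exact sidem a ha
    rw [hfix] at hmem
    simpa [abs_of_nonneg (hs0 a ha)] using hmem
  have hts : ∀ a : E, 0 ≤ a → s (t a) = t a := by
    intro a ha
    have hmem : t a ∈ {x : E | t |x| = |x|} := by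
      simp only [Set.mem_setOf_eq, abs_of_nonneg (ht0 a ha)]
      exact tidem a ha
    rw [← hfix] at hmem
    simpa [abs_of_nonneg (ht0 a ha)] using hmem
  intro x hx
  have h1 : x ⊓ t (s x) = t x ⊓ s x := htτ1 x (s x) hx (hs0 x hx)
  rw [hst x hx, inf_eq_right.mpr (hsle x hx)] at h1
  have hle1 : s x ≤ t x := h1.le.trans inf_le_left
  have h2 : x ⊓ s (t x) = s x ⊓ t x := hsτ1 x (t x) hx (ht0 x hx)
  rw [hts x hx, inf_eq_right.mpr (htle x hx)] at h2
  have hle2 : t x ≤ s x := h2.le.trans inf_le_left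
  exact le_antisymm hle1 hle2
end

section
/- Let \(E = \mathbb{R}^2\) with the lexicographic order and define \(\overline{(x,y)} = (x,y) \wedge (0,1)\) for \((x,y) \in E^+\). Then this map is a truncation on E satisfying the Archimedean truncation axiom (\(\tau_3\)): if \(\overline{na} = na\) for all \(n \in \mathbb{N}\), then \(a = 0\); yet E itself is not an Archimedean Riesz space. -/
/-!
If all multiples of `a ≥ 0` stay below `(0, c)`, comparing first coordinates forces `a = (0, y)`,
and then `n • y ≤ c` for all `n` forces `y = 0` because `ℝ` is Archimedean. The plane itself is
not Archimedean: every multiple of `(0, 1)` lies below `(1, 0)`.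
-/

theorem nonpos_of_forall_nsmul_le {α : Type*} [AddCommMonoid α] [LinearOrder α]
    [AddLeftStrictMono α] [Archimedean α] {a b : α} (h : ∀ n : ℕ, n • a ≤ b) : a ≤ 0 :=
  not_lt.1 fun ha ↦
    let ⟨n, hn⟩ := exists_lt_nsmul ha b
    (h n).not_gt hn

namespace Prod.Lex

variable {α β : Type*}

theorem nsmul_toLex_mk [AddMonoid α] [AddMonoid β] (n : ℕ) (x : α) (y : β) :
    n • toLex (x, y) = toLex (n • x, n • y) :=
  rfl

theorem eq_zero_of_forall_nsmul_le_toLex_zero [AddMonoid α] [PartialOrder α]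
    [AddCommMonoid β] [LinearOrder β] [AddLeftStrictMono β] [Archimedean β]
    {a : α ×ₗ β} {c : β} (ha : 0 ≤ a) (h : ∀ n : ℕ, n • a ≤ toLex (0, c)) : a = 0 := by
  obtain ⟨⟨x, y⟩, rfl⟩ := toLex.surjective a
  rw [← toLex_zero, Prod.zero_eq_mk, toLex_le_toLex'] at ha
  have hx : x = 0 := le_antisymm (monotone_fst _ _ (by simpa using h 1)) ha.1
  subst hx
  have hy : y ≤ 0 := nonpos_of_forall_nsmul_le fun n ↦ by
    simpa [nsmul_toLex_mk, toLex_le_toLex'] using h n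
  rw [le_antisymm hy (ha.2 rfl)]
  rfl

theorem nsmul_toLex_zero_lt [AddMonoid α] [Preorder α] [AddMonoid β] [LT β] {d : α}
    (hd : 0 < d) (c e : β) (n : ℕ) : n • toLex ((0 : α), c) < toLex (d, e) := by
  rw [nsmul_toLex_mk, nsmul_zero, toLex_lt_toLex]
  exact Or.inl hd

end Prod.Lex

/-- On `ℝ² ` with the lexicographic order, `a ↦ a ⊓ (0,1)` is a truncation
satisfying the Archimedean truncation axiom `(τ₃)`, although the lexicographic plane is
not an Archimedean Riesz space. -/
theorem lex_plane_archimedean_truncation :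
    (∀ a : ℝ ×ₗ ℝ, 0 ≤ a → 0 ≤ a ⊓ toLex (0, 1)) ∧
    (∀ a b : ℝ ×ₗ ℝ, 0 ≤ a → 0 ≤ b →
      a ⊓ (b ⊓ toLex (0, 1)) ≤ a ⊓ toLex (0, 1) ∧ a ⊓ toLex (0, 1) ≤ a) ∧
    (∀ a : ℝ ×ₗ ℝ, 0 ≤ a → a ⊓ toLex (0, 1) = 0 → a = 0) ∧
    (∀ a : ℝ ×ₗ ℝ, 0 ≤ a → (∀ n : ℕ, (n • a) ⊓ toLex (0, 1) = n • a) → a = 0) ∧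
    ¬ (∀ x y : ℝ ×ₗ ℝ, 0 ≤ x → (∀ n : ℕ, n • x ≤ y) → x = 0) := by
  have he : (0 : ℝ ×ₗ ℝ) < toLex (0, 1) :=
    Prod.Lex.toLex_strictMono (Prod.mk_lt_mk_iff_right.2 zero_lt_one)
  refine ⟨fun a ha ↦ le_inf ha he.le,
    fun a b _ _ ↦ ⟨inf_le_inf_left a inf_le_right, inf_le_left⟩, ?_, ?_, ?_⟩
  · intro a _ h
    rcases min_choice a (toLex (0, 1)) with h' | h'
    · exact h' ▸ h
    · exact absurd (h'.symm.trans h) he.ne'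
  · exact fun a ha h ↦
      Prod.Lex.eq_zero_of_forall_nsmul_le_toLex_zero ha fun n ↦ inf_eq_left.mp (h n)
  · exact fun harch ↦ he.ne' <| harch _ (toLex (1, 0)) he.le fun n ↦
      (Prod.Lex.nsmul_toLex_zero_lt one_pos 1 0 n).le
end

section
/- The truncation on the Riesz space \(c_{00}\) of eventually zero real sequences defined by \(\bar{u} = u \wedge \mathbf{1}\) (pointwise minimum with the constant sequence 1) is a truncation but is not unital: there is no \(v \in c_{00}^+\) with \(u \wedge \mathbf{1} = u \wedge v\) for all \(u \in c_{00}^+\). -/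
namespace Finsupp

variable {ι : Type*}

/-- `u ⊓ 1` taken coordinatewise, since the constant sequence `1` is not finitely supported. -/
noncomputable def truncOne (u : ι →₀ ℝ) : ι →₀ ℝ :=
  mapRange (· ⊓ 1) (by norm_num) u

@[simp]
theorem truncOne_apply (u : ι →₀ ℝ) (i : ι) : truncOne u i = min (u i) 1 :=
  mapRange_apply ..

theorem truncOne_nonneg {u : ι →₀ ℝ} (hu : 0 ≤ u) : 0 ≤ truncOne u := fun i => by
  simpa using hu i

theorem truncOne_le (u : ι →₀ ℝ) : truncOne u ≤ u := fun i => by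
  simp

theorem inf_truncOne_le (u v : ι →₀ ℝ) : u ⊓ truncOne v ≤ truncOne u := fun i => by
  simp only [inf_apply, truncOne_apply]
  exact inf_le_inf_left _ inf_le_right

theorem truncOne_eq_zero_iff {u : ι →₀ ℝ} : truncOne u = 0 ↔ u = 0 := by
  refine ⟨fun h => ext fun i => ?_, fun h => by ext; simp [h]⟩
  have hi : min (u i) 1 = 0 := by simpa using DFunLike.congr_fun h i
  rcases min_choice (u i) 1 with h1 | h1 <;> simp_all

theorem exists_truncOne_ne_inf [Infinite ι] (v : ι →₀ ℝ) :
    ∃ u : ι →₀ ℝ, 0 ≤ u ∧ truncOne u ≠ u ⊓ v := by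
  -- At a coordinate `i` outside the support of `v`, `single i 1` truncates to `1` but meets `v` in `0`.
  obtain ⟨i, hi⟩ := Infinite.exists_notMem_finset v.support
  refine ⟨single i 1, single_nonneg.mpr zero_le_one, fun h => ?_⟩
  have hvi : v i = 0 := notMem_support_iff.mp hi
  have := DFunLike.congr_fun h i
  simp [hvi] at this

end Finsupp

open Finsupp in
/-- On `c₀₀` (finitely supported real sequences), `u ↦ u ⊓ 1` (pointwise
minimum with the constant sequence `1`) is a truncation, but it is not unital. -/
theorem c00_truncation_not_unital :
    ∃ t : (ℕ →₀ ℝ) → (ℕ →₀ ℝ),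
      (∀ u : ℕ →₀ ℝ, 0 ≤ u → ∀ n, t u n = min (u n) 1) ∧
      (∀ u : ℕ →₀ ℝ, 0 ≤ u → 0 ≤ t u) ∧
      (∀ u v : ℕ →₀ ℝ, 0 ≤ u → 0 ≤ v → u ⊓ t v ≤ t u ∧ t u ≤ u) ∧
      (∀ u : ℕ →₀ ℝ, 0 ≤ u → t u = 0 → u = 0) ∧
      ¬ ∃ v : ℕ →₀ ℝ, 0 ≤ v ∧ ∀ u : ℕ →₀ ℝ, 0 ≤ u → t u = u ⊓ v := by
  refine ⟨truncOne, fun u _ => truncOne_apply u, fun _ => truncOne_nonneg,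
    fun u v _ _ => ⟨inf_truncOne_le u v, truncOne_le u⟩,
    fun _ _ => truncOne_eq_zero_iff.mp, ?_⟩
  rintro ⟨v, -, hv⟩
  obtain ⟨u, hu, hne⟩ := exists_truncOne_ne_inf v
  exact hne (hv u hu)
end

section
/- Let E be a truncated Riesz space and let F = E \oplus \mathbb{R} be its unitization, so that E is a maximal ideal in F, and let A be a nonempty subset of E. If \(a_0 = \sup A\) exists in E, then \(a_0\) is also the supremum of A in \(E \oplus \mathbb{R}\). -/
/-- If `E` is an ideal in the Riesz space `F = E ⊕ ℝe` (with the unitization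
positivity property that `0 ≤ x + αe` with `x ∈ E` forces `0 ≤ α`), then the supremum of a
nonempty subset `A ⊆ E` computed in `E` is still the supremum of `A` in `F`. -/
theorem sup_in_ideal_is_sup_in_unitization {F : Type*} [Lattice F] [AddCommGroup F]
    [CovariantClass F F (· + ·) (· ≤ ·)] [Module ℝ F]
    (e : F) (he : 0 ≤ e) (E : Set F)
    (hzero : (0 : F) ∈ E)
    (hadd : ∀ x ∈ E, ∀ y ∈ E, x + y ∈ E)
    (hneg : ∀ x ∈ E, -x ∈ E)
    (hsolid : ∀ x ∈ E, ∀ y : F, |y| ≤ |x| → y ∈ E)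
    (hdecomp : ∀ w : F, ∃ x ∈ E, ∃ α : ℝ, w = x + α • e)
    (hposcone : ∀ x ∈ E, ∀ α : ℝ, 0 ≤ x + α • e → 0 ≤ α)
    (A : Set F) (hA : A.Nonempty) (hAE : A ⊆ E)
    (a0 : F) (ha0 : a0 ∈ E) (hub : a0 ∈ upperBounds A)
    (hleast : ∀ b ∈ E, b ∈ upperBounds A → a0 ≤ b) :
    IsLUB A a0 := by
  refine ⟨hub, fun w hw => ?_⟩
  obtain ⟨x, hxE, α, rfl⟩ := hdecomp w
  obtain ⟨a, haA⟩ := hA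
  have haE : a ∈ E := hAE haA
  have haw : a ≤ x + α • e := hw haA
  -- the key element
  set m : F := ((a0 - x) ⊔ 0) ⊓ (α • e) with hm
  have hxaE : a0 - x ∈ E := by
    rw [sub_eq_add_neg]; exact hadd a0 ha0 (-x) (hneg x hxE)
  have haxE : a - x ∈ E := by
    rw [sub_eq_add_neg]; exact hadd a haE (-x) (hneg x hxE)
  have hmub : a - x ≤ m := by
    refine le_inf (le_sup_of_le_left (sub_le_sub_right (hub haA) x)) ?_
    exact sub_le_iff_le_add'.mpr haw
  have hmE : m ∈ E := by
    have hsum : |a0 - x| + |a - x| ∈ E := by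
      refine hadd _ (hsolid _ hxaE _ (le_of_eq (abs_abs _))) _
        (hsolid _ haxE _ (le_of_eq (abs_abs _)))
    refine hsolid _ hsum m ?_
    have hnn : (0:F) ≤ |a0 - x| + |a - x| := add_nonneg (abs_nonneg _) (abs_nonneg _)
    rw [abs_of_nonneg hnn]
    refine abs_le'.mpr ⟨?_, ?_⟩
    · calc m ≤ (a0 - x) ⊔ 0 := inf_le_left
        _ ≤ |a0 - x| := sup_le (le_abs_self _) (abs_nonneg _)
        _ ≤ _ := le_add_of_nonneg_right (abs_nonneg _)
    · calc -m ≤ -(a - x) := neg_le_neg_iff.mpr hmub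
        _ ≤ |a - x| := neg_le_abs _
        _ ≤ _ := le_add_of_nonneg_left (abs_nonneg _)
  have hyub : x + m ∈ upperBounds A := by
    intro b hbA
    have hb1 : b - x ≤ (a0 - x) ⊔ 0 :=
      le_sup_of_le_left (sub_le_sub_right (hub hbA) x)
    have hb2 : b - x ≤ α • e := sub_le_iff_le_add'.mpr (hw hbA)
    have hbm : b - x ≤ m := le_inf hb1 hb2
    calc b = x + (b - x) := by abel
      _ ≤ x + m := add_le_add_right hbm x
  have hyE : x + m ∈ E := hadd x hxE m hmE
  have h1 : a0 ≤ x + m := hleast _ hyE hyub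
  have h2 : x + m ≤ x + α • e := add_le_add_right inf_le_right x
  exact h1.trans h2
end
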